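/- Let S be a positive semidefinite n×n complex matrix, ψ ∈ ℂ^n a unit vector, π := ψψ*, and γ := ψ*Sψ − ψ*S(1−π)·((1−π)S(1−π))^+·(1−π)Sψ, where (·)^+ is the spectral pseudo-inverse. Then for every real number c, the matrix S − c·ψψ* is positive semidefinite if and only if c ≤ γ. In particular, if S is positive definite then γ = 1/⟨ψ, S^{−1}ψ⟩. -/

import Mathlib

open Matrix
open scoped Kronecker ComplexOrder

noncomputable section

/-- A probability vector on a finite set. -/
def ProbVec {X : Type*} [Fintype X] (p : X → ℝ) : Prop :=
  (∀ x, 0 ≤ p x) ∧ ∑ x, p x = 1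

/-- A density matrix: positive semidefinite with trace one. -/
def IsDensityMatrix {n : ℕ} (ρ : Matrix (Fin n) (Fin n) ℂ) : Prop :=
  ρ.PosSemidef ∧ ρ.trace = 1

/-- The action of a classical-to-quantum channel, given by a family of density
matrices `ρ`, on a probability vector `p`. -/
def cqApply {X : Type*} [Fintype X] {n : ℕ} (ρ : X → Matrix (Fin n) (Fin n) ℂ)
    (p : X → ℝ) : Matrix (Fin n) (Fin n) ℂ :=
  ∑ x, (p x : ℂ) • ρ x

/-- The recession slope `lim_{λ → ∞} f(λ)/λ`, as an extended real number.
(For convex continuous `f` the limit exists and equals this limsup.) -/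
def recessionSlope (f : ℝ → ℝ) : EReal :=
  Filter.limsup (fun lam : ℝ => ((f lam / lam : ℝ) : EReal)) Filter.atTop

/-- The `f`-divergence of two probability vectors, valued in `ℝ ∪ {+∞}`
(with the convention `0 * ∞ = 0`, which holds for `EReal` multiplication). -/
def fDiv {X : Type*} [Fintype X] (f : ℝ → ℝ) (p0 p1 : X → ℝ) : EReal :=
  ((∑ x, if 0 < p1 x then p1 x * f (p0 x / p1 x) else 0 : ℝ) : EReal)
    + ((∑ x, if 0 < p1 x then 0 else p0 x : ℝ) : EReal) * recessionSlope f

/-- The maximal `f`-divergence: the infimum of `D_f(q0‖q1)` over all classical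
families mapped onto `(σ0, σ1)` by some classical-to-quantum channel. -/
def DfMax {n : ℕ} (f : ℝ → ℝ) (σ0 σ1 : Matrix (Fin n) (Fin n) ℂ) : EReal :=
  sInf { d : EReal |
    ∃ (m : ℕ) (q0 q1 : Fin m → ℝ) (ρ : Fin m → Matrix (Fin n) (Fin n) ℂ),
      ProbVec q0 ∧ ProbVec q1 ∧ (∀ x, IsDensityMatrix (ρ x)) ∧
      cqApply ρ q0 = σ0 ∧ cqApply ρ q1 = σ1 ∧ d = fDiv f q0 q1 }

/-- Spectral functional calculus for Hermitian matrices (junk value `0` on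
non-Hermitian input). -/
def hermCFC {n : ℕ} (f : ℝ → ℝ) (A : Matrix (Fin n) (Fin n) ℂ) :
    Matrix (Fin n) (Fin n) ℂ :=
  if hA : A.IsHermitian then
    (hA.eigenvectorUnitary : Matrix (Fin n) (Fin n) ℂ) *
      Matrix.diagonal (fun i => (f (hA.eigenvalues i) : ℂ)) *
      (star (hA.eigenvectorUnitary : Matrix (Fin n) (Fin n) ℂ))
  else 0

/-- Spectral pseudo-inverse: invert the nonzero eigenvalues. -/
def pinvMat {n : ℕ} (A : Matrix (Fin n) (Fin n) ℂ) : Matrix (Fin n) (Fin n) ℂ :=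
  hermCFC (fun x => if x = 0 then 0 else x⁻¹) A

/-- Orthogonal projection onto the range of a Hermitian matrix
(spectral projection onto the nonzero eigenvalues). -/
def rangeProj {n : ℕ} (A : Matrix (Fin n) (Fin n) ℂ) : Matrix (Fin n) (Fin n) ℂ :=
  hermCFC (fun x => if x = 0 then 0 else 1) A

/-- `A ↦ (A⁺)^{1/2}`, the square root of the spectral pseudo-inverse. -/
def invSqrtMat {n : ℕ} (A : Matrix (Fin n) (Fin n) ℂ) : Matrix (Fin n) (Fin n) ℂ :=
  hermCFC (fun x => if x = 0 then 0 else (Real.sqrt x)⁻¹) A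

/-- Generalized Schur complement of `σ0` with respect to a projection `π`:
`π σ0 π − π σ0 (1−π) · ((1−π) σ0 (1−π))⁺ · (1−π) σ0 π`. -/
def schurCompl {n : ℕ} (σ0 π : Matrix (Fin n) (Fin n) ℂ) :
    Matrix (Fin n) (Fin n) ℂ :=
  π * σ0 * π -
    (π * σ0 * (1 - π)) * pinvMat ((1 - π) * σ0 * (1 - π)) * ((1 - π) * σ0 * π)

/-- `σ̃0`: the generalized Schur complement of `σ0` with respect to the
projection onto the range of `σ1`. -/
def sigmaTilde {n : ℕ} (σ0 σ1 : Matrix (Fin n) (Fin n) ℂ) :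
    Matrix (Fin n) (Fin n) ℂ :=
  schurCompl σ0 (rangeProj σ1)

/-- The closed-form expression
`F_f(σ0,σ1) = tr σ1 f(σ1^{-1/2} σ̃0 σ1^{-1/2}) + (1 − tr σ̃0) L(f)`. -/
def Ff {n : ℕ} (f : ℝ → ℝ) (σ0 σ1 : Matrix (Fin n) (Fin n) ℂ) : EReal :=
  (((σ1 * hermCFC f (invSqrtMat σ1 * sigmaTilde σ0 σ1 * invSqrtMat σ1)).trace.re : ℝ) : EReal)
    + ((1 - (sigmaTilde σ0 σ1).trace.re : ℝ) : EReal) * recessionSlope f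

/-- Operator convexity of a function on `[0,∞)`, via the spectral functional
calculus on positive semidefinite complex matrices. -/
def OperatorConvex (f : ℝ → ℝ) : Prop :=
  ∀ (n : ℕ) (A B : Matrix (Fin n) (Fin n) ℂ), A.PosSemidef → B.PosSemidef →
    ∀ t : ℝ, 0 ≤ t → t ≤ 1 →
      (t • hermCFC f A + (1 - t) • hermCFC f B
        - hermCFC f (t • A + (1 - t) • B)).PosSemidef

/-- A CPTP map between matrix algebras: trace preserving and with positive
semidefinite Choi matrix. -/
def IsCPTP {n k : ℕ}
    (Λ : Matrix (Fin n) (Fin n) ℂ →ₗ[ℂ] Matrix (Fin k) (Fin k) ℂ) : Prop :=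
  (∀ A, (Λ A).trace = A.trace) ∧
    (∑ i : Fin n, ∑ j : Fin n,
      (Λ (Matrix.single i j 1)) ⊗ₖ (Matrix.single i j (1 : ℂ))).PosSemidef

/-- The largest eigenvalue of a Hermitian matrix (junk value `0` otherwise). -/
def lmax {k : ℕ} (W : Matrix (Fin k) (Fin k) ℂ) : ℝ :=
  if h : W.IsHermitian then ⨆ i, h.eigenvalues i else 0

/-- A stochastic matrix (`P y x` is the probability of `y` given `x`). -/
def IsStochastic {X Y : Type*} [Fintype X] [Fintype Y] (P : Y → X → ℝ) : Prop :=
  (∀ y x, 0 ≤ P y x) ∧ ∀ x, ∑ y, P y x = 1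

/-- The action of a stochastic matrix on a probability vector. -/
def stocApply {X Y : Type*} [Fintype X] [Fintype Y] (P : Y → X → ℝ)
    (p : X → ℝ) : Y → ℝ :=
  fun y => ∑ x, P y x * p x

end

/-- `γ = ψ*Sψ − ψ*S(1−π)·((1−π)S(1−π))⁺·(1−π)Sψ` where `π = ψψ*`. -/
noncomputable def gammaOf {n : ℕ} (S : Matrix (Fin n) (Fin n) ℂ) (ψ : Fin n → ℂ) : ℝ :=
  (star ψ ⬝ᵥ S *ᵥ ψ -
    star ψ ⬝ᵥ ((S * (1 - vecMulVec ψ (star ψ)) *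
      pinvMat ((1 - vecMulVec ψ (star ψ)) * S * (1 - vecMulVec ψ (star ψ))) *
      ((1 - vecMulVec ψ (star ψ)) * S)) *ᵥ ψ)).re

/-!
Split `ℂⁿ = ℂψ ⊕ ψ^⊥` with `Q = 1 - ψψ*`, so that `S` has the blocks `⟨ψ, Sψ⟩`, `b = QSψ` and
`D = QSQ`. For `v = aψ + w` with `w = Qv`,
`⟨v, Sv⟩ = |a|² ⟨ψ, Sψ⟩ + ā ⟨b, w⟩ + a ⟨w, b⟩ + ⟨w, Dw⟩`.
Writing `S = R*R` gives `D = C*C` and `b = C*(Rψ)` with `C = RQ`, so `b` lies in the range of `D`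
and `y = D⁺b` solves `Dy = b`. Completing the square then gives
`⟨v, Sv⟩ = γ |a|² + ⟨w + a y, D (w + a y)⟩`, and the second term vanishes at `v = ψ - y`.
Hence `⟨v, Sv⟩ ≥ c |⟨ψ, v⟩|²` for all `v` iff `c ≤ γ`.

If `S > 0`, put `t = ⟨ψ, S⁻¹ψ⟩`. Cauchy–Schwarz for the form of `S`, applied to `S⁻¹ψ` and `v`,
gives `|⟨ψ, v⟩|² ≤ t ⟨v, Sv⟩`, so `1/t ≤ γ`. Testing `S - γψψ* ≥ 0` on `S⁻¹ψ` gives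
`γ t² ≤ t`.
-/

theorem Matrix.cfc_mul_cfc {ι 𝕜 : Type*} [Fintype ι] [DecidableEq ι] [RCLike 𝕜] (f g : ℝ → ℝ)
    (A : Matrix ι ι 𝕜) : cfc f A * cfc g A = cfc (fun x => f x * g x) A :=
  (cfc_mul f g A (A.finite_real_spectrum.continuousOn f)
    (A.finite_real_spectrum.continuousOn g)).symm

section PseudoInverse

variable {n : ℕ}

theorem hermCFC_eq_cfc (f : ℝ → ℝ) {A : Matrix (Fin n) (Fin n) ℂ} (hA : A.IsHermitian) :
    hermCFC f A = cfc f A := by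
  rw [hA.cfc_eq, IsHermitian.cfc, Unitary.conjStarAlgAut_apply, hermCFC, dif_pos hA]
  rfl

/-- The case split in `pinvMat` is invisible here because `(0 : ℝ)⁻¹ = 0`. -/
theorem pinvMat_eq_cfc_inv {A : Matrix (Fin n) (Fin n) ℂ} (hA : A.IsHermitian) :
    pinvMat A = cfc (·⁻¹ : ℝ → ℝ) A := by
  rw [pinvMat, hermCFC_eq_cfc _ hA]
  congr with x
  split_ifs with h <;> simp [h]

theorem isHermitian_pinvMat {A : Matrix (Fin n) (Fin n) ℂ} (hA : A.IsHermitian) :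
    (pinvMat A).IsHermitian := by
  rw [pinvMat_eq_cfc_inv hA]
  exact cfc_predicate _ A

theorem mul_pinvMat_mul_self {A : Matrix (Fin n) (Fin n) ℂ} (hA : A.IsHermitian) :
    A * pinvMat A * A = A := by
  have hA' : IsSelfAdjoint A := hA
  rw [pinvMat_eq_cfc_inv hA]
  nth_rw 1 [← cfc_id' ℝ A]
  nth_rw 3 [← cfc_id' ℝ A]
  rw [Matrix.cfc_mul_cfc, Matrix.cfc_mul_cfc]
  simp only [mul_inv_mul_cancel]
  exact cfc_id' ℝ A

theorem pinvMat_mul_pinvMat_mul_self {A : Matrix (Fin n) (Fin n) ℂ} (hA : A.IsHermitian) :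
    pinvMat A * pinvMat A * A = pinvMat A := by
  have hA' : IsSelfAdjoint A := hA
  rw [pinvMat_eq_cfc_inv hA]
  nth_rw 3 [← cfc_id' ℝ A]
  rw [Matrix.cfc_mul_cfc, Matrix.cfc_mul_cfc]
  congr with x
  simpa using mul_self_mul_inv x⁻¹

theorem pinvMat_mul_of_mul_eq {A M : Matrix (Fin n) (Fin n) ℂ} (hA : A.IsHermitian)
    (h : A * M = A) : pinvMat A * M = pinvMat A := by
  calc pinvMat A * M = pinvMat A * pinvMat A * A * M := by rw [pinvMat_mul_pinvMat_mul_self hA]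
    _ = pinvMat A := by rw [Matrix.mul_assoc _ A M, h, pinvMat_mul_pinvMat_mul_self hA]

theorem conjTranspose_mul_self_mul_pinvMat_mul_conjTranspose {m : Type*} [Fintype m]
    (C : Matrix m (Fin n) ℂ) : Cᴴ * C * pinvMat (Cᴴ * C) * Cᴴ = Cᴴ := by
  have h : (1 - Cᴴ * C * pinvMat (Cᴴ * C)) * (Cᴴ * C) = 0 := by
    rw [sub_mul, one_mul, mul_pinvMat_mul_self (isHermitian_conjTranspose_mul_self C), sub_self]
  rwa [mul_conjTranspose_mul_self_eq_zero, Matrix.sub_mul, Matrix.one_mul, sub_eq_zero,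
    eq_comm] at h

end PseudoInverse

section QuadraticForms

variable {m : Type*} [Fintype m]

theorem Matrix.IsHermitian.posSemidef_iff_re_nonneg {𝕜 : Type*} [RCLike 𝕜] {A : Matrix m m 𝕜}
    (hA : A.IsHermitian) : A.PosSemidef ↔ ∀ x, 0 ≤ RCLike.re (star x ⬝ᵥ A *ᵥ x) := by
  rw [posSemidef_iff_dotProduct_mulVec]
  refine ⟨fun h x => (RCLike.nonneg_iff.mp (h.2 x)).1, fun h => ⟨hA, fun x => ?_⟩⟩
  exact RCLike.nonneg_iff.mpr ⟨h x, hA.im_star_dotProduct_mulVec_self x⟩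

theorem star_mulVec_dotProduct {R : Type*} [CommRing R] [StarRing R]
    (M : Matrix m m R) (x y : m → R) : star (M *ᵥ x) ⬝ᵥ y = star x ⬝ᵥ Mᴴ *ᵥ y := by
  rw [star_mulVec, dotProduct_mulVec]

theorem Matrix.PosSemidef.normSq_star_dotProduct_mulVec_le {A : Matrix m m ℂ}
    (hA : A.PosSemidef) (x y : m → ℂ) :
    Complex.normSq (star x ⬝ᵥ A *ᵥ y) ≤ (star x ⬝ᵥ A *ᵥ x).re * (star y ⬝ᵥ A *ᵥ y).re := by
  let := A.toSeminormedAddCommGroup hA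
  let := A.toInnerProductSpace hA
  have h := inner_mul_inner_self_le (𝕜 := ℂ) x y
  rw [← inner_conj_symm y x, RCLike.norm_conj] at h
  have hi : ∀ u v : m → ℂ, inner ℂ u v = star u ⬝ᵥ A *ᵥ v := fun u v => dotProduct_comm _ _
  simpa only [hi, Complex.normSq_eq_norm_sq, sq, RCLike.re_to_complex] using h

theorem star_dotProduct_mulVec_add_smul_of_mulVec_eq {R : Type*} [CommRing R] [StarRing R]
    {B : Matrix m m R} (hB : B.IsHermitian) {y z : m → R} (hy : B *ᵥ y = z) (w : m → R) (a : R) :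
    star (w + a • y) ⬝ᵥ B *ᵥ (w + a • y) = star w ⬝ᵥ B *ᵥ w +
      star a * (star z ⬝ᵥ w) + a * (star w ⬝ᵥ z) + star a * a * (star z ⬝ᵥ y) := by
  have hyB (x : m → R) : star y ⬝ᵥ B *ᵥ x = star z ⬝ᵥ x := by
    rw [← hB.eq, ← star_mulVec_dotProduct, hy]
  have hyz : star y ⬝ᵥ z = star z ⬝ᵥ y := by rw [← hyB, hy]
  simp only [star_add, star_smul, add_dotProduct, dotProduct_add, mulVec_add, mulVec_smul,
    smul_dotProduct, dotProduct_smul, smul_eq_mul, hyB, hy, hyz]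
  ring

end QuadraticForms

section RankOneProjection

variable {m : Type*} (ψ : m → ℂ)

theorem isHermitian_vecMulVec_star : (vecMulVec ψ (star ψ)).IsHermitian := by
  rw [IsHermitian, conjTranspose_vecMulVec, star_star]

variable [Fintype m]

theorem vecMulVec_star_mulVec (x : m → ℂ) : vecMulVec ψ (star ψ) *ᵥ x = (star ψ ⬝ᵥ x) • ψ := by
  rw [vecMulVec_mulVec, op_smul_eq_smul]

theorem star_dotProduct_vecMulVec_star_mulVec (x : m → ℂ) :
    star x ⬝ᵥ vecMulVec ψ (star ψ) *ᵥ x = (Complex.normSq (star ψ ⬝ᵥ x) : ℂ) := by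
  rw [vecMulVec_star_mulVec, dotProduct_smul, smul_eq_mul, star_dotProduct x ψ]
  exact Complex.mul_conj _

variable {ψ}

theorem vecMulVec_star_mul_self (hψ : star ψ ⬝ᵥ ψ = 1) :
    vecMulVec ψ (star ψ) * vecMulVec ψ (star ψ) = vecMulVec ψ (star ψ) := by
  rw [vecMulVec_mul_vecMulVec, hψ, one_smul]

theorem posSemidef_sub_smul_vecMulVec_iff_forall {S : Matrix m m ℂ} (hS : S.IsHermitian) (c : ℝ) :
    (S - (c : ℂ) • vecMulVec ψ (star ψ)).PosSemidef ↔
      ∀ x, c * Complex.normSq (star ψ ⬝ᵥ x) ≤ (star x ⬝ᵥ S *ᵥ x).re := by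
  rw [IsHermitian.posSemidef_iff_re_nonneg
    (hS.sub ((isHermitian_vecMulVec_star ψ).smul (Complex.conj_ofReal c)))]
  refine forall_congr' fun x => ?_
  rw [sub_mulVec, dotProduct_sub, smul_mulVec, dotProduct_smul,
    star_dotProduct_vecMulVec_star_mulVec, smul_eq_mul, ← Complex.ofReal_mul, RCLike.re_to_complex,
    Complex.sub_re, Complex.ofReal_re, sub_nonneg]

end RankOneProjection

section PerpBlocks

variable {n : ℕ} (S : Matrix (Fin n) (Fin n) ℂ) (ψ : Fin n → ℂ)

def perpProj : Matrix (Fin n) (Fin n) ℂ := 1 - vecMulVec ψ (star ψ)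

def perpBlock : Matrix (Fin n) (Fin n) ℂ := perpProj ψ * S * perpProj ψ

def offDiagBlock : Fin n → ℂ := (perpProj ψ * S) *ᵥ ψ

noncomputable def perpBlockPinvOffDiag : Fin n → ℂ := pinvMat (perpBlock S ψ) *ᵥ offDiagBlock S ψ

theorem isHermitian_perpProj : (perpProj ψ).IsHermitian :=
  isHermitian_one.sub (isHermitian_vecMulVec_star ψ)

variable {S ψ}

theorem perpProj_mul_self (hψ : star ψ ⬝ᵥ ψ = 1) : perpProj ψ * perpProj ψ = perpProj ψ := by
  simp only [perpProj, sub_mul, mul_sub, one_mul, mul_one, vecMulVec_star_mul_self hψ, sub_self,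
    sub_zero]

theorem perpProj_mulVec_self (hψ : star ψ ⬝ᵥ ψ = 1) : perpProj ψ *ᵥ ψ = 0 := by
  rw [perpProj, sub_mulVec, one_mulVec, vecMulVec_star_mulVec, hψ, one_smul, sub_self]

theorem star_dotProduct_perpProj_mulVec (hψ : star ψ ⬝ᵥ ψ = 1) (x : Fin n → ℂ) :
    star ψ ⬝ᵥ perpProj ψ *ᵥ x = 0 := by
  rw [dotProduct_mulVec, ← (isHermitian_perpProj ψ).eq, ← star_mulVec, perpProj_mulVec_self hψ,
    star_zero, zero_dotProduct]

theorem isHermitian_perpBlock (hS : S.IsHermitian) : (perpBlock S ψ).IsHermitian := by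
  simpa only [perpBlock, (isHermitian_perpProj ψ).eq] using
    isHermitian_mul_mul_conjTranspose (perpProj ψ) hS

theorem posSemidef_perpBlock (hS : S.PosSemidef) : (perpBlock S ψ).PosSemidef := by
  simpa only [perpBlock, (isHermitian_perpProj ψ).eq] using
    hS.mul_mul_conjTranspose_same (perpProj ψ)

open scoped MatrixOrder in
theorem perpBlock_mulVec_perpBlockPinvOffDiag (hS : S.PosSemidef) :
    perpBlock S ψ *ᵥ perpBlockPinvOffDiag S ψ = offDiagBlock S ψ := by
  obtain ⟨R, rfl⟩ := CStarAlgebra.nonneg_iff_eq_star_mul_self.mp hS.nonneg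
  have hD : perpBlock (star R * R) ψ = (R * perpProj ψ)ᴴ * (R * perpProj ψ) := by
    rw [perpBlock, conjTranspose_mul, (isHermitian_perpProj ψ).eq, star_eq_conjTranspose]
    simp only [Matrix.mul_assoc]
  have hz : offDiagBlock (star R * R) ψ = (R * perpProj ψ)ᴴ *ᵥ R *ᵥ ψ := by
    rw [offDiagBlock, conjTranspose_mul, (isHermitian_perpProj ψ).eq, star_eq_conjTranspose,
      mulVec_mulVec, Matrix.mul_assoc]
  have hrange (C : Matrix (Fin n) (Fin n) ℂ) (y : Fin n → ℂ) :
      (Cᴴ * C) *ᵥ pinvMat (Cᴴ * C) *ᵥ Cᴴ *ᵥ y = Cᴴ *ᵥ y := by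
    rw [mulVec_mulVec, mulVec_mulVec, conjTranspose_mul_self_mul_pinvMat_mul_conjTranspose]
  rw [perpBlockPinvOffDiag, hz, hD, hrange]

theorem perpProj_mulVec_perpBlockPinvOffDiag (hS : S.IsHermitian) (hψ : star ψ ⬝ᵥ ψ = 1) :
    perpProj ψ *ᵥ perpBlockPinvOffDiag S ψ = perpBlockPinvOffDiag S ψ := by
  have hD := isHermitian_perpBlock hS (ψ := ψ)
  have hKQ := pinvMat_mul_of_mul_eq hD
    (by rw [perpBlock, Matrix.mul_assoc _ (perpProj ψ), perpProj_mul_self hψ])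
  have hQK : perpProj ψ * pinvMat (perpBlock S ψ) = pinvMat (perpBlock S ψ) := by
    simpa only [conjTranspose_mul, (isHermitian_pinvMat hD).eq, (isHermitian_perpProj ψ).eq]
      using congrArg conjTranspose hKQ
  rw [perpBlockPinvOffDiag, mulVec_mulVec, hQK]

theorem gammaOf_eq (hS : S.IsHermitian) :
    gammaOf S ψ = (star ψ ⬝ᵥ S *ᵥ ψ -
      star (offDiagBlock S ψ) ⬝ᵥ perpBlockPinvOffDiag S ψ).re := by
  rw [gammaOf, perpBlockPinvOffDiag, offDiagBlock, star_mulVec, ← dotProduct_mulVec,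
    conjTranspose_mul, hS.eq, (isHermitian_perpProj ψ).eq, mulVec_mulVec, mulVec_mulVec]
  simp only [perpBlock, perpProj, Matrix.mul_assoc]

end PerpBlocks

section GammaOf

variable {n : ℕ} {S : Matrix (Fin n) (Fin n) ℂ} {ψ : Fin n → ℂ}

theorem star_dotProduct_mulVec_smul_add (hS : S.IsHermitian) (a : ℂ) {w : Fin n → ℂ}
    (hw : perpProj ψ *ᵥ w = w) :
    star (a • ψ + w) ⬝ᵥ S *ᵥ (a • ψ + w) = star a * a * (star ψ ⬝ᵥ S *ᵥ ψ) +
      star a * (star (offDiagBlock S ψ) ⬝ᵥ w) + a * (star w ⬝ᵥ offDiagBlock S ψ) +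
      star w ⬝ᵥ perpBlock S ψ *ᵥ w := by
  have hQ := (isHermitian_perpProj ψ).eq
  have hψSw : star ψ ⬝ᵥ S *ᵥ w = star (offDiagBlock S ψ) ⬝ᵥ w := by
    rw [offDiagBlock, star_mulVec_dotProduct, conjTranspose_mul, hS.eq, hQ, ← mulVec_mulVec, hw]
  have hwSψ : star w ⬝ᵥ S *ᵥ ψ = star w ⬝ᵥ offDiagBlock S ψ := by
    rw [offDiagBlock, ← mulVec_mulVec, ← hQ, ← star_mulVec_dotProduct, hw]
  have hwSw : star w ⬝ᵥ S *ᵥ w = star w ⬝ᵥ perpBlock S ψ *ᵥ w := by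
    rw [perpBlock, ← mulVec_mulVec, ← mulVec_mulVec, hw, ← hQ, ← star_mulVec_dotProduct, hw]
  simp only [star_add, star_smul, add_dotProduct, dotProduct_add, mulVec_add, mulVec_smul,
    smul_dotProduct, dotProduct_smul, smul_eq_mul, hψSw, hwSψ, hwSw]
  ring

theorem re_star_dotProduct_mulVec_eq_gammaOf (hS : S.PosSemidef) (hψ : star ψ ⬝ᵥ ψ = 1)
    (v : Fin n → ℂ) :
    (star v ⬝ᵥ S *ᵥ v).re = gammaOf S ψ * Complex.normSq (star ψ ⬝ᵥ v) +
      (star (perpProj ψ *ᵥ v + (star ψ ⬝ᵥ v) • perpBlockPinvOffDiag S ψ) ⬝ᵥ perpBlock S ψ *ᵥ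
        (perpProj ψ *ᵥ v + (star ψ ⬝ᵥ v) • perpBlockPinvOffDiag S ψ)).re := by
  have hv : v = (star ψ ⬝ᵥ v) • ψ + perpProj ψ *ᵥ v := by
    rw [perpProj, sub_mulVec, one_mulVec, vecMulVec_star_mulVec, add_sub_cancel]
  have hQv : perpProj ψ *ᵥ perpProj ψ *ᵥ v = perpProj ψ *ᵥ v := by
    rw [mulVec_mulVec, perpProj_mul_self hψ]
  rw [star_dotProduct_mulVec_add_smul_of_mulVec_eq (isHermitian_perpBlock hS.1)
    (perpBlock_mulVec_perpBlockPinvOffDiag hS), gammaOf_eq hS.1, ← Complex.re_mul_ofReal,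
    Complex.normSq_eq_conj_mul_self, ← Complex.add_re]
  conv_lhs => rw [hv, star_dotProduct_mulVec_smul_add hS.1 _ hQv]
  congr 1
  simp only [Complex.star_def]
  ring

theorem posSemidef_sub_smul_vecMulVec_iff_le_gammaOf (hS : S.PosSemidef) (hψ : star ψ ⬝ᵥ ψ = 1)
    (c : ℝ) : (S - (c : ℂ) • vecMulVec ψ (star ψ)).PosSemidef ↔ c ≤ gammaOf S ψ := by
  rw [posSemidef_sub_smul_vecMulVec_iff_forall hS.1]
  constructor
  · intro h
    set y := perpBlockPinvOffDiag S ψ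
    have hy : perpProj ψ *ᵥ y = y := perpProj_mulVec_perpBlockPinvOffDiag hS.1 hψ
    have ha : star ψ ⬝ᵥ (ψ - y) = 1 := by
      rw [dotProduct_sub, hψ, ← hy, star_dotProduct_perpProj_mulVec hψ, sub_zero]
    have hu : perpProj ψ *ᵥ (ψ - y) + (1 : ℂ) • y = 0 := by
      rw [mulVec_sub, perpProj_mulVec_self hψ, hy, one_smul, zero_sub, neg_add_cancel]
    have h := h (ψ - y)
    rw [re_star_dotProduct_mulVec_eq_gammaOf hS hψ, ha, hu] at h
    simpa using h
  · intro hc x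
    have hu := (posSemidef_perpBlock hS (ψ := ψ)).re_dotProduct_nonneg
      (perpProj ψ *ᵥ x + (star ψ ⬝ᵥ x) • perpBlockPinvOffDiag S ψ)
    rw [RCLike.re_to_complex] at hu
    rw [re_star_dotProduct_mulVec_eq_gammaOf hS hψ x]
    linarith [mul_le_mul_of_nonneg_right hc (Complex.normSq_nonneg (star ψ ⬝ᵥ x))]

theorem gammaOf_eq_one_div_of_posDef (hS : S.PosDef) (hψ : star ψ ⬝ᵥ ψ = 1) :
    gammaOf S ψ = 1 / (star ψ ⬝ᵥ S⁻¹ *ᵥ ψ).re := by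
  set w := S⁻¹ *ᵥ ψ
  have hSw : S *ᵥ w = ψ := by
    rw [mulVec_mulVec, mul_nonsing_inv _ hS.det_pos.ne'.isUnit, one_mulVec]
  have hwS (x : Fin n → ℂ) : star w ⬝ᵥ S *ᵥ x = star ψ ⬝ᵥ x := by
    rw [← hS.1.eq, ← star_mulVec_dotProduct, hSw]
  have hw : w ≠ 0 := by
    rintro hw
    rw [hw, mulVec_zero] at hSw
    simp [← hSw] at hψ
  set t := (star w ⬝ᵥ S *ᵥ w).re
  have ht : 0 < t := hS.re_dotProduct_pos hw
  have hψw : (star ψ ⬝ᵥ w).re = t := by rw [← hwS]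
  have hnormSq : Complex.normSq (star ψ ⬝ᵥ w) = t * t := by
    have him : (star w ⬝ᵥ S *ᵥ w).im = 0 := hS.1.im_star_dotProduct_mulVec_self w
    rw [← hwS, Complex.normSq_apply, him, mul_zero, add_zero]
  have hγ := posSemidef_sub_smul_vecMulVec_iff_le_gammaOf hS.posSemidef hψ
  have hform := posSemidef_sub_smul_vecMulVec_iff_forall hS.1 (ψ := ψ)
  rw [hψw]
  refine le_antisymm ?_ ((hγ _).mp ((hform _).mpr fun x => ?_))
  · have h := (hform _).mp ((hγ _).mpr le_rfl) w
    rw [hnormSq] at h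
    rw [le_div_iff₀ ht]
    nlinarith
  · have h := hS.posSemidef.normSq_star_dotProduct_mulVec_le w x
    rw [hwS] at h
    rwa [one_div, inv_mul_le_iff₀ ht]

end GammaOf

/-- `S − c·ψψ*` is positive semidefinite iff `c ≤ γ`; and if `S`
is positive definite then `γ = 1/⟨ψ, S⁻¹ψ⟩`. -/
theorem sub_smul_proj_posSemidef_iff {n : ℕ} (S : Matrix (Fin n) (Fin n) ℂ)
    (hS : S.PosSemidef) (ψ : Fin n → ℂ) (hψ : star ψ ⬝ᵥ ψ = 1) :
    (∀ c : ℝ, (S - (c : ℂ) • vecMulVec ψ (star ψ)).PosSemidef ↔ c ≤ gammaOf S ψ) ∧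
      (S.PosDef → gammaOf S ψ = 1 / (star ψ ⬝ᵥ S⁻¹ *ᵥ ψ).re) :=
  ⟨posSemidef_sub_smul_vecMulVec_iff_le_gammaOf hS hψ,
    fun hS' => gammaOf_eq_one_div_of_posDef hS' hψ⟩
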